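/- Let α > −1 be fixed, let λ : ℕ → (0,1) satisfy λ(n)·n → ∞, and let z : ℕ → ℝ_{>0} satisfy z(n) = o(λ(n)·n) as n → ∞. For each n, consider the star infection chain with n leaves started at a state (1, I₀(n)) with 0 ≤ I₀(n) ≤ λ(n)n/4 − λ(n)n/(4z(n)). Let E_n be the event that the number of infected leaves reaches at least I₀(n) + ⌈λ(n)n/(4z(n))⌉ before the center heals (i.e. before the first coordinate becomes 0). Then there exists a constant C > 0 such that for all sufficiently large n, Pr[E_n] ≥ exp(−C/z(n)). -/

import Mathlib

open scoped ENNReal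
open Filter Asymptotics

noncomputable def markovDist {S : Type*} [DecidableEq S] (step : S → S → ℝ≥0∞) (s0 : S) :
    ℕ → S → ℝ≥0∞
  | 0 => fun J => if J = s0 then 1 else 0
  | t + 1 => fun J => ∑' s : S, markovDist step s0 t s * step s J

open Classical in
noncomputable def absorbStep {S : Type*} (A : Set S) (step : S → S → ℝ≥0∞) :
    S → S → ℝ≥0∞ :=
  fun s => if s ∈ A then (fun J => if J = s then 1 else 0) else step s

noncomputable def hitProb {S : Type*} [DecidableEq S] (step : S → S → ℝ≥0∞) (s0 : S)
    (A : Set S) : ℝ≥0∞ :=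
  ⨆ t : ℕ, ∑' s : S, A.indicator (markovDist (absorbStep A step) s0 t) s

noncomputable def cliqueStep (n : ℕ) (lam alpha : ℝ) (I : ℕ) : ℕ → ℝ≥0∞ :=
  if I = 0 ∨ n < I then fun J => if J = I then 1 else 0
  else fun J =>
    if J = I + 1 then
      ENNReal.ofReal (lam * (I : ℝ) ^ (1 + alpha) * ((n : ℝ) - I) /
        (lam * (I : ℝ) ^ (1 + alpha) * ((n : ℝ) - I) + I))
    else if J = I - 1 then
      ENNReal.ofReal ((I : ℝ) /
        (lam * (I : ℝ) ^ (1 + alpha) * ((n : ℝ) - I) + I))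
    else 0

noncomputable def cliqueDist (n : ℕ) (lam alpha : ℝ) (x0 : ℕ) : ℕ → ℕ → ℝ≥0∞ :=
  markovDist (cliqueStep n lam alpha) x0

noncomputable def cliqueET (n : ℕ) (lam alpha : ℝ) (x0 : ℕ) : ℝ≥0∞ :=
  ∑' t : ℕ, (1 - cliqueDist n lam alpha x0 t 0)

noncomputable def starStep (n : ℕ) (lam alpha : ℝ) : Bool × ℕ → Bool × ℕ → ℝ≥0∞
  | (false, I) =>
    if I = 0 ∨ n < I then fun J => if J = ((false : Bool), I) then 1 else 0
    else fun J =>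
      if J = (false, I - 1) then
        ENNReal.ofReal ((I : ℝ) / ((I : ℝ) + lam * (I : ℝ) ^ (1 + alpha)))
      else if J = (true, I) then
        ENNReal.ofReal (lam * (I : ℝ) ^ (1 + alpha) / ((I : ℝ) + lam * (I : ℝ) ^ (1 + alpha)))
      else 0
  | (true, I) =>
    if n < I then fun J => if J = ((true : Bool), I) then 1 else 0
    else fun J =>
      if J = (true, I + 1) then
        ENNReal.ofReal (lam * ((n : ℝ) - I) / (lam * ((n : ℝ) - I) + I + 1))
      else if J = (true, I - 1) then
        ENNReal.ofReal ((I : ℝ) / (lam * ((n : ℝ) - I) + I + 1))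
      else if J = (false, I) then
        ENNReal.ofReal (1 / (lam * ((n : ℝ) - I) + I + 1))
      else 0

noncomputable def starDist (n : ℕ) (lam alpha : ℝ) (s0 : Bool × ℕ) :
    ℕ → Bool × ℕ → ℝ≥0∞ :=
  markovDist (starStep n lam alpha) s0

noncomputable def starET (n : ℕ) (lam alpha : ℝ) (s0 : Bool × ℕ) : ℝ≥0∞ :=
  ∑' t : ℕ, (1 - starDist n lam alpha s0 t ((false : Bool), 0))

/-!
While the center is infected, the number `I` of infected leaves goes up with probability
`λ(n-I)/r`, down with probability `I/r`, and the center heals with probability `1/r`, where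
`r = λ(n-I)+I+1`. Let `M` be the target and `θ = 1 - ε` with `ε = 2/(λn)`. As long as
`I ≤ λn/4` the upward drift dominates, which makes `θ^(M-I)` subharmonic for the walk stopped at
`M` and at healing; so its expectation never drops below its initial value `θ^K`. Each step
heals the center with probability at least `1/(n+1)`, so the mass left on the transient states
`I < M` vanishes geometrically and in the limit the whole expectation sits on the target. Hence
the hitting probability is at least `(1-ε)^K ≥ exp(-2εK)`, and `2εK ≤ 5/z` once `z ≤ λn`.
-/

theorem absorbStep_of_notMem {S : Type*} (step : S → S → ℝ≥0∞) {A : Set S} {s : S} (h : s ∉ A) :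
    absorbStep A step s = step s := by
  simp [absorbStep, h]

theorem tsum_absorbStep_mul_of_mem {S : Type*} (step : S → S → ℝ≥0∞) {A : Set S} {s : S}
    (h : s ∈ A) (g : S → ℝ≥0∞) :
    ∑' J, absorbStep A step s J * g J = g s := by
  simp [absorbStep, h]

section MarkovChain

variable {S : Type*} [DecidableEq S] (step : S → S → ℝ≥0∞) (s0 : S)

theorem tsum_markovDist_zero_mul (g : S → ℝ≥0∞) :
    ∑' s, markovDist step s0 0 s * g s = g s0 := by
  simp [markovDist]

theorem tsum_markovDist_succ_mul (t : ℕ) (g : S → ℝ≥0∞) :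
    ∑' J, markovDist step s0 (t + 1) J * g J =
      ∑' s, markovDist step s0 t s * ∑' J, step s J * g J := by
  simp only [markovDist, ← ENNReal.tsum_mul_right, ← ENNReal.tsum_mul_left, mul_assoc]
  exact ENNReal.tsum_comm

theorem le_tsum_markovDist_mul {g : S → ℝ≥0∞} (hg : ∀ s, g s ≤ ∑' J, step s J * g J) (t : ℕ) :
    g s0 ≤ ∑' s, markovDist step s0 t s * g s := by
  induction t with
  | zero => rw [tsum_markovDist_zero_mul]
  | succ t ih =>
    rw [tsum_markovDist_succ_mul]
    exact ih.trans (ENNReal.tsum_le_tsum fun s => mul_le_mul_right (hg s) _)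

theorem tsum_markovDist_mul_le {g : S → ℝ≥0∞} {β : ℝ≥0∞}
    (hg : ∀ s, ∑' J, step s J * g J ≤ β * g s) (t : ℕ) :
    ∑' s, markovDist step s0 t s * g s ≤ β ^ t * g s0 := by
  induction t with
  | zero => rw [tsum_markovDist_zero_mul, pow_zero, one_mul]
  | succ t ih =>
    calc ∑' s, markovDist step s0 (t + 1) s * g s
        ≤ ∑' s, markovDist step s0 t s * (β * g s) := by
          rw [tsum_markovDist_succ_mul]
          exact ENNReal.tsum_le_tsum fun s => mul_le_mul_right (hg s) _
      _ = β * ∑' s, markovDist step s0 t s * g s := by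
          rw [← ENNReal.tsum_mul_left]
          simp only [mul_left_comm]
      _ ≤ β ^ (t + 1) * g s0 := by
          rw [pow_succ', mul_assoc]
          exact mul_le_mul_right ih _

theorem tsum_indicator_markovDist_le_hitProb (A : Set S) (t : ℕ) :
    ∑' s, markovDist (absorbStep A step) s0 t s * A.indicator 1 s ≤ hitProb step s0 A := by
  refine le_of_eq_of_le ?_ (le_iSup _ t)
  congr 1
  funext s
  by_cases hs : s ∈ A <;> simp [hs]

theorem le_hitProb_of_subharmonic {A T : Set S} {g : S → ℝ≥0∞} {β : ℝ≥0∞} (hβ : β < 1)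
    (hAT : Disjoint A T)
    (hg : ∀ s ∉ A, g s ≤ ∑' J, step s J * g J)
    (hgAT : ∀ s, g s ≤ A.indicator 1 s + T.indicator 1 s)
    (hT : ∀ s ∉ A, ∑' J, step s J * T.indicator 1 J ≤ β * T.indicator 1 s) :
    g s0 ≤ hitProb step s0 A := by
  have hgP : ∀ s, g s ≤ ∑' J, absorbStep A step s J * g J := fun s => by
    by_cases hs : s ∈ A
    · rw [tsum_absorbStep_mul_of_mem _ hs]
    · rw [absorbStep_of_notMem _ hs]; exact hg s hs
  have hTP : ∀ s, ∑' J, absorbStep A step s J * T.indicator 1 J ≤ β * T.indicator 1 s :=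
      fun s => by
    by_cases hs : s ∈ A
    · rw [tsum_absorbStep_mul_of_mem _ hs, Set.indicator_of_notMem (hAT.notMem_of_mem_left hs),
        mul_zero]
    · rw [absorbStep_of_notMem _ hs]; exact hT s hs
  set P := absorbStep A step
  have hbound : ∀ t : ℕ, g s0 ≤ hitProb step s0 A + β ^ t := fun t =>
    calc g s0 ≤ ∑' s, markovDist P s0 t s * g s := le_tsum_markovDist_mul P s0 hgP t
      _ ≤ ∑' s, (markovDist P s0 t s * A.indicator 1 s + markovDist P s0 t s * T.indicator 1 s) :=
          ENNReal.tsum_le_tsum fun s => (mul_le_mul_right (hgAT s) _).trans_eq (mul_add _ _ _)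
      _ = ∑' s, markovDist P s0 t s * A.indicator 1 s
            + ∑' s, markovDist P s0 t s * T.indicator 1 s := ENNReal.tsum_add
      _ ≤ hitProb step s0 A + β ^ t * T.indicator 1 s0 :=
          add_le_add (tsum_indicator_markovDist_le_hitProb step s0 A t)
            (tsum_markovDist_mul_le P s0 hTP t)
      _ ≤ hitProb step s0 A + β ^ t := by
          gcongr
          exact mul_le_of_le_one_right' (Set.indicator_le_self' (fun _ _ => zero_le_one) s0)
  have hlim : Tendsto (fun t : ℕ => hitProb step s0 A + β ^ t) atTop
      (nhds (hitProb step s0 A)) := by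
    simpa using tendsto_const_nhds.add (ENNReal.tendsto_pow_atTop_nhds_zero_of_lt_one hβ)
  exact ge_of_tendsto' hlim hbound

end MarkovChain

theorem one_sub_mul_le_of_drift {a x ε : ℝ} (hx : 0 ≤ x) (hε : 0 ≤ ε)
    (h : 1 + ε * x ≤ ε * a) : (1 - ε) * (a + x + 1) ≤ a + x * (1 - ε) ^ 2 := by
  nlinarith [mul_nonneg hx (mul_nonneg hε hε)]

theorem exp_neg_two_mul_le_one_sub {x : ℝ} (hx0 : 0 ≤ x) (hx : x ≤ 1 / 2) :
    Real.exp (-(2 * x)) ≤ 1 - x := by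
  rw [Real.exp_neg, inv_le_iff_one_le_mul₀' (Real.exp_pos _)]
  nlinarith [Real.add_one_le_exp (2 * x)]

def starPotential (θ : ℝ) (M : ℕ) : Bool × ℕ → ℝ≥0∞
  | (true, I) => if I ≤ M then ENNReal.ofReal (θ ^ (M - I)) else 0
  | (false, _) => 0

section Star

variable {n : ℕ} {lam : ℝ} (alpha : ℝ)

theorem tsum_starStep_true_mul {I : ℕ} (hI : I ≤ n) (g : Bool × ℕ → ℝ≥0∞) :
    ∑' J, starStep n lam alpha (true, I) J * g J =
      ENNReal.ofReal (lam * ((n : ℝ) - I) / (lam * ((n : ℝ) - I) + I + 1)) * g (true, I + 1)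
      + ENNReal.ofReal ((I : ℝ) / (lam * ((n : ℝ) - I) + I + 1)) * g (true, I - 1)
      + ENNReal.ofReal (1 / (lam * ((n : ℝ) - I) + I + 1)) * g (false, I) := by
  have hud : (true, I + 1) ≠ (true, I - 1) := by simp; omega
  rw [tsum_eq_sum (s := {(true, I + 1), (true, I - 1), (false, I)})]
  · rw [Finset.sum_insert (by simp [hud]), Finset.sum_insert (by simp), Finset.sum_singleton]
    simp [starStep, if_neg (not_lt.mpr hI), hud.symm, add_assoc]
  · intro J hJ
    simp only [Finset.mem_insert, Finset.mem_singleton, not_or] at hJ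
    simp [starStep, if_neg (not_lt.mpr hI), hJ.1, hJ.2.1, hJ.2.2]

theorem tsum_starStep_true_mul_of_lt {I : ℕ} (hI : n < I) (g : Bool × ℕ → ℝ≥0∞) :
    ∑' J, starStep n lam alpha (true, I) J * g J = g (true, I) := by
  simp [starStep, hI]

theorem starPotential_le_tsum {M : ℕ} {ε : ℝ} (hε0 : 0 ≤ ε) (hε1 : ε ≤ 1) (hMn : M ≤ n)
    (hdrift : ∀ I : ℕ, I < M → 1 + ε * I ≤ ε * (lam * ((n : ℝ) - I)))
    (s : Bool × ℕ) (hs : s ∉ ({(true, M)} : Set (Bool × ℕ))) :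
    starPotential (1 - ε) M s ≤
      ∑' J, absorbStep {s : Bool × ℕ | s.1 = false} (starStep n lam alpha) s J *
        starPotential (1 - ε) M J := by
  obtain ⟨_ | _, I⟩ := s
  · simp [starPotential]
  obtain hIM | hMI := lt_or_ge I M
  swap
  · have hMI : M < I := lt_of_le_of_ne hMI (by simpa [eq_comm] using hs)
    simp [starPotential, hMI.not_ge]
  set θ := 1 - ε
  have hθ : 0 ≤ θ := by simp only [θ]; linarith
  set a := lam * ((n : ℝ) - I)
  have hdriftI := hdrift I hIM
  have hr : 0 < a + I + 1 := by nlinarith [(Nat.cast_nonneg I : (0 : ℝ) ≤ I)]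
  obtain ⟨k, hk⟩ : ∃ k, M - I = k + 1 := ⟨M - I - 1, by omega⟩
  have hup : starPotential θ M (true, I + 1) = ENNReal.ofReal (θ ^ k) := by
    simp [starPotential, show I + 1 ≤ M by omega, show M - (I + 1) = k by omega]
  have hdown : ENNReal.ofReal (θ ^ (k + 2)) ≤ starPotential θ M (true, I - 1) := by
    simp only [starPotential, show I - 1 ≤ M by omega, if_true]
    exact ENNReal.ofReal_le_ofReal (pow_le_pow_of_le_one hθ (by linarith) (by omega))
  have hreal : θ ^ (k + 1) ≤ a / (a + I + 1) * θ ^ k + I / (a + I + 1) * θ ^ (k + 2) := by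
    rw [div_mul_eq_mul_div, div_mul_eq_mul_div, ← add_div, le_div_iff₀ hr]
    calc θ ^ (k + 1) * (a + I + 1) = θ ^ k * (θ * (a + I + 1)) := by ring
      _ ≤ θ ^ k * (a + I * θ ^ 2) :=
          mul_le_mul_of_nonneg_left (one_sub_mul_le_of_drift I.cast_nonneg hε0 hdriftI)
            (pow_nonneg hθ k)
      _ = a * θ ^ k + I * θ ^ (k + 2) := by ring
  rw [absorbStep_of_notMem _ (by simp), tsum_starStep_true_mul alpha (by omega)]
  refine le_add_right ?_
  calc starPotential θ M (true, I) = ENNReal.ofReal (θ ^ (k + 1)) := by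
        simp [starPotential, hIM.le, hk]
    _ ≤ ENNReal.ofReal (a / (a + I + 1) * θ ^ k)
          + ENNReal.ofReal (I / (a + I + 1) * θ ^ (k + 2)) :=
        (ENNReal.ofReal_le_ofReal hreal).trans ENNReal.ofReal_add_le
    _ ≤ _ := by
        rw [ENNReal.ofReal_mul' (pow_nonneg hθ _), ENNReal.ofReal_mul' (pow_nonneg hθ _), hup]
        gcongr

theorem tsum_starStep_mul_indicator_le {M : ℕ} (hlam0 : 0 ≤ lam) (hlam1 : lam ≤ 1)
    (hMn : M ≤ n) (s : Bool × ℕ) (hs : s ∉ ({(true, M)} : Set (Bool × ℕ))) :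
    ∑' J, absorbStep {s : Bool × ℕ | s.1 = false} (starStep n lam alpha) s J *
        {s : Bool × ℕ | s.1 = true ∧ s.2 < M}.indicator 1 J ≤
      ENNReal.ofReal (n / (n + 1)) * {s : Bool × ℕ | s.1 = true ∧ s.2 < M}.indicator 1 s := by
  obtain ⟨_ | _, I⟩ := s
  · rw [tsum_absorbStep_mul_of_mem _ (by simp)]
    simp
  rw [absorbStep_of_notMem _ (by simp)]
  obtain hIn | hnI := le_or_gt I n
  swap
  · rw [tsum_starStep_true_mul_of_lt alpha hnI]
    simp [show ¬ I < M by omega]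
  rw [tsum_starStep_true_mul alpha hIn]
  obtain hIM | hMI := lt_or_ge I M
  swap
  · have hMI : M < I := lt_of_le_of_ne hMI (by simpa [eq_comm] using hs)
    simp [Set.indicator_apply, show ¬ I + 1 < M by omega, show ¬ I - 1 < M by omega]
  set a := lam * ((n : ℝ) - I)
  have hIn' : (I : ℝ) ≤ n := by exact_mod_cast hIn
  have ha : 0 ≤ a := mul_nonneg hlam0 (by linarith)
  have han : a ≤ n - I := mul_le_of_le_one_left (by linarith) hlam1
  calc _ ≤ ENNReal.ofReal (a / (a + I + 1)) * 1 + ENNReal.ofReal (I / (a + I + 1)) * 1 + 0 := by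
        gcongr <;> first | exact Set.indicator_le_self' (fun _ _ => zero_le_one) _ | simp
    _ ≤ ENNReal.ofReal (n / (n + 1)) := by
        rw [mul_one, mul_one, add_zero, ← ENNReal.ofReal_add (by positivity) (by positivity),
          ← add_div]
        refine ENNReal.ofReal_le_ofReal ?_
        rw [div_le_div_iff₀ (by positivity) (by positivity)]
        nlinarith
    _ = _ := by simp [hIM]

theorem le_hitProb_starStep {I0 K : ℕ} {ε : ℝ} (hlam0 : 0 ≤ lam) (hlam1 : lam ≤ 1)
    (hε0 : 0 ≤ ε) (hε1 : ε ≤ 1) (hMn : I0 + K ≤ n)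
    (hdrift : ∀ I : ℕ, I < I0 + K → 1 + ε * I ≤ ε * (lam * ((n : ℝ) - I))) :
    ENNReal.ofReal ((1 - ε) ^ K) ≤
      hitProb (absorbStep {s : Bool × ℕ | s.1 = false} (starStep n lam alpha))
        (true, I0) {(true, I0 + K)} := by
  have hβ : ENNReal.ofReal (n / (n + 1)) < 1 :=
    ENNReal.ofReal_lt_one.mpr ((div_lt_one (by positivity)).mpr (lt_add_one _))
  have hAT : Disjoint ({(true, I0 + K)} : Set (Bool × ℕ)) {s | s.1 = true ∧ s.2 < I0 + K} := by
    simp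
  have hsupp : ∀ s, starPotential (1 - ε) (I0 + K) s ≤
      ({(true, I0 + K)} : Set (Bool × ℕ)).indicator 1 s
        + {s : Bool × ℕ | s.1 = true ∧ s.2 < I0 + K}.indicator 1 s := by
    rintro ⟨_ | _, I⟩
    · simp [starPotential]
    obtain hIM | rfl | hMI := lt_trichotomy I (I0 + K)
    · simp only [starPotential, hIM.le, if_true, Set.indicator_of_mem (show (true, I) ∈
        {s : Bool × ℕ | s.1 = true ∧ s.2 < I0 + K} from ⟨rfl, hIM⟩)]
      exact le_add_left (ENNReal.ofReal_le_one.mpr (pow_le_one₀ (by linarith) (by linarith)))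
    · simp [starPotential]
    · simp [starPotential, hMI.not_ge]
  simpa [starPotential] using le_hitProb_of_subharmonic _ (true, I0) hβ hAT
    (starPotential_le_tsum alpha hε0 hε1 hMn hdrift) hsupp
    (tsum_starStep_mul_indicator_le alpha hlam0 hlam1 hMn)

theorem le_hitProb_starStep_of_le_quarter {I0 K : ℕ} (hlam1 : lam ≤ 1) (hL : 4 ≤ lam * n)
    (hM : (I0 + K : ℝ) ≤ lam * n / 4 + 1) :
    ENNReal.ofReal ((1 - 2 / (lam * n)) ^ K) ≤
      hitProb (absorbStep {s : Bool × ℕ | s.1 = false} (starStep n lam alpha))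
        (true, I0) {(true, I0 + K)} := by
  have hlam0 : 0 ≤ lam := by
    by_contra! h
    nlinarith [(Nat.cast_nonneg n : (0 : ℝ) ≤ n)]
  have hnL : lam * n ≤ n := mul_le_of_le_one_left n.cast_nonneg hlam1
  refine le_hitProb_starStep alpha hlam0 hlam1 (by positivity)
    ((div_le_one (by positivity)).mpr (by linarith))
    (by exact_mod_cast (by linarith : (I0 + K : ℝ) ≤ n)) ?_
  intro I hI
  have hI' : (I : ℝ) + 1 ≤ I0 + K := by exact_mod_cast hI
  have hε : 2 / (lam * n) * (lam * n) = 2 := div_mul_cancel₀ _ (by positivity)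
  nlinarith [mul_le_of_le_one_left I.cast_nonneg hlam1]

end Star

theorem star_gain_probability_general (alpha : ℝ) (lam z : ℕ → ℝ)
    (hlam : ∀ n, 0 < lam n ∧ lam n < 1) (hz : ∀ n, 0 < z n)
    (hln : Tendsto (fun n : ℕ => lam n * n) atTop atTop)
    (hzo : (fun n : ℕ => z n) =o[atTop] (fun n : ℕ => lam n * n))
    (I0 : ℕ → ℕ)
    (hI0 : ∀ n, (I0 n : ℝ) ≤ lam n * n / 4 - lam n * n / (4 * z n)) :
    ∃ C : ℝ, 0 < C ∧ ∀ᶠ n : ℕ in atTop,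
      ENNReal.ofReal (Real.exp (-C / z n)) ≤
        hitProb (absorbStep {s : Bool × ℕ | s.1 = false} (starStep n (lam n) alpha))
          ((true : Bool), I0 n)
          {((true : Bool), I0 n + ⌈lam n * n / (4 * z n)⌉₊)} := by
  refine ⟨5, by norm_num, ?_⟩
  filter_upwards [hln.eventually_ge_atTop 4, hzo.bound one_pos] with n hL hbound
  set L := lam n * n
  set K := ⌈L / (4 * z n)⌉₊
  have hzn := hz n
  have hzL : z n ≤ L := by
    simpa [abs_of_pos hzn, abs_of_pos (by linarith : 0 < L)] using hbound
  have hK : (K : ℝ) ≤ L / (4 * z n) + 1 := (Nat.ceil_lt_add_one (by positivity)).le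
  have hKz : 4 * K * z n ≤ L + 4 * z n := by
    have := mul_le_mul_of_nonneg_right hK (by positivity : (0 : ℝ) ≤ 4 * z n)
    rw [add_mul, div_mul_cancel₀ _ (by positivity), one_mul] at this
    linarith
  have hεK : 2 * (2 / L) * K ≤ 5 / z n := by
    rw [le_div_iff₀ hzn, show 2 * (2 / L) * K * z n = 4 * K * z n / L by ring,
      div_le_iff₀ (by linarith)]
    linarith
  refine (ENNReal.ofReal_le_ofReal ?_).trans
    (le_hitProb_starStep_of_le_quarter alpha (hlam n).2.le hL (by linarith [hI0 n]))
  calc Real.exp (-5 / z n) ≤ Real.exp (K * -(2 * (2 / L))) := by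
        rw [Real.exp_le_exp, neg_div]
        linarith
    _ = Real.exp (-(2 * (2 / L))) ^ K := Real.exp_nat_mul _ K
    _ ≤ (1 - 2 / L) ^ K :=
        pow_le_pow_left₀ (Real.exp_pos _).le
          (exp_neg_two_mul_le_one_sub (by positivity)
            (by rw [div_le_iff₀ (by linarith)]; linarith)) K

/-- With the center infected and at most λn/4 − λn/(4z) infected leaves,
the probability of gaining ⌈λn/(4z)⌉ infected leaves before the center heals is at
least exp(−C/z). -/
theorem star_gain_probability (alpha : ℝ) (ha : -1 < alpha) (lam z : ℕ → ℝ)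
    (hlam : ∀ n, 0 < lam n ∧ lam n < 1) (hz : ∀ n, 0 < z n)
    (hln : Tendsto (fun n : ℕ => lam n * n) atTop atTop)
    (hzo : (fun n : ℕ => z n) =o[atTop] (fun n : ℕ => lam n * n))
    (I0 : ℕ → ℕ)
    (hI0 : ∀ n, (I0 n : ℝ) ≤ lam n * n / 4 - lam n * n / (4 * z n)) :
    ∃ C : ℝ, 0 < C ∧ ∀ᶠ n : ℕ in atTop,
      ENNReal.ofReal (Real.exp (-C / z n)) ≤
        hitProb (absorbStep {s : Bool × ℕ | s.1 = false} (starStep n (lam n) alpha))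
          ((true : Bool), I0 n)
          {((true : Bool), I0 n + ⌈lam n * n / (4 * z n)⌉₊)} :=
  star_gain_probability_general alpha lam z hlam hz hln hzo I0 hI0
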